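/- Let Γ be a group acting metrically properly on the space of distinct triples of a metric space X of bounded diameter, in the following weak sense: for every pair of disjoint open sets U,V of distance ≥ ν and every point (a,b) with a ∈ U, b ∈ V, only finitely many g ∈ Γ satisfy g(U×V×Z)∩(U×V×Z) ≠ ∅, where Z is the set of points of distance > ν from U∪V. Suppose g ∈ Γ acts on X with north-south dynamics with ordered fixed-point pair (a,b) and D ⊂ X−{a,b} is a set of positive distance to {a,b} which is a fundamental domain for the cyclic group ⟨g⟩ acting on X−{a,b}. If (a_i,b_i) is a sequence in the Γ-orbit of (a,b) with (a_i,b_i)→(a,b) and (a_i,b_i)≠(a,b), then a contradiction results; hence the Γ-orbit of (a,b) is a discrete subset of X×X minus the diagonal. -/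

import Mathlib

open Filter

/-- North-south dynamics for the action of a group element on a metric space. -/
def NorthSouthAct {Γ X : Type*} [Group Γ] [MetricSpace X] [MulAction Γ X]
    (g : Γ) (a b : X) : Prop :=
  (∀ ε : ℝ, 0 < ε → ∃ m : ℕ, 0 < m ∧
      (∀ x : X, x ∉ Metric.ball b ε → (g ^ m) • x ∈ Metric.ball a ε) ∧
      (∀ x : X, x ∉ Metric.ball a ε → (g⁻¹ ^ m) • x ∈ Metric.ball b ε)) ∧
  (∃ δ : ℝ, 0 < δ ∧ ∀ z : X, z ≠ a → z ≠ b →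
      ∃ m : ℤ, (g ^ m) • z ∉ Metric.ball a δ ∧ (g ^ m) • z ∉ Metric.ball b δ)

/-- Let `Γ` be a countable group acting by homeomorphisms on a metric space `X` of
bounded diameter, with the weak metric properness property for triples: for disjoint
open sets `U, V` at distance `≥ ν` with `a ∈ U`, `b ∈ V`, only finitely many
`g ∈ Γ` satisfy `g(U×V×Z) ∩ (U×V×Z) ≠ ∅`, where `Z` is the set of points at
distance `> ν` from `U ∪ V`.  If `g₀ ∈ Γ` acts with north-south dynamics with
ordered pair of fixed points `(a,b)` and admits a fundamental domain `D` of
positive distance to `{a,b}` for the action of `⟨g₀⟩` on `X − {a,b}`, then no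
sequence of points of the `Γ`-orbit of `(a,b)` distinct from `(a,b)` converges to
`(a,b)`; hence the orbit of `(a,b)` is a discrete subset of `X×X` minus the
diagonal. -/
theorem orbit_of_fixed_pair_discrete {Γ X : Type*} [Group Γ] [Countable Γ]
    [MetricSpace X] [MulAction Γ X]
    (hbdd : ∃ D₀ : ℝ, ∀ x y : X, dist x y ≤ D₀)
    (hcont : ∀ g : Γ, Continuous fun x : X => g • x)
    (hproper : ∀ ν : ℝ, 0 < ν → ∀ U V : Set X, IsOpen U → IsOpen V →
      (∀ u ∈ U, ∀ v ∈ V, ν ≤ dist u v) → ∀ a ∈ U, ∀ b ∈ V,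
      Set.Finite {g : Γ | ∃ x ∈ U, ∃ y ∈ V, ∃ z : X,
        (∀ w ∈ U ∪ V, ν < dist z w) ∧ g • x ∈ U ∧ g • y ∈ V ∧
        (∀ w ∈ U ∪ V, ν < dist (g • z) w)})
    (g₀ : Γ) (a b : X) (hab : a ≠ b) (hfa : g₀ • a = a) (hfb : g₀ • b = b)
    (hns : NorthSouthAct g₀ a b)
    (D : Set X) (hD : ∃ ρ : ℝ, 0 < ρ ∧ ∀ x ∈ D, ρ ≤ dist x a ∧ ρ ≤ dist x b)
    (hfund : ∀ z : X, z ≠ a → z ≠ b → ∃ m : ℤ, (g₀ ^ m) • z ∈ D) :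
    (¬ ∃ u : ℕ → Γ, (∀ i, (u i • a, u i • b) ≠ (a, b)) ∧
        Tendsto (fun i => (u i • a, u i • b)) atTop (nhds (a, b))) ∧
    (∀ g₁ : Γ, ∃ ε : ℝ, 0 < ε ∧ ∀ g : Γ, (g • a, g • b) ≠ (g₁ • a, g₁ • b) →
        ε ≤ dist (g • a) (g₁ • a) + dist (g • b) (g₁ • b)) := by
  classical
  have key : ¬ ∃ u : ℕ → Γ, (∀ i, (u i • a, u i • b) ≠ (a, b)) ∧
      Tendsto (fun i => (u i • a, u i • b)) atTop (nhds (a, b)) := by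
    rintro ⟨u, hne, htt⟩
    obtain ⟨ρ, hρ, hDρ⟩ := hD
    set r : ℝ := min (ρ / 4) (dist a b / 4) with hrdef
    have hab' : 0 < dist a b := dist_pos.mpr hab
    have hr0 : 0 < r := lt_min (by linarith) (by linarith)
    have hrρ : 4 * r ≤ ρ := by
      have := min_le_left (ρ / 4) (dist a b / 4); simp only [← hrdef] at this; linarith
    have hrab : 4 * r ≤ dist a b := by
      have := min_le_right (ρ / 4) (dist a b / 4); simp only [← hrdef] at this; linarith
    set U := Metric.ball a r with hUdef
    set V := Metric.ball b r with hVdef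
    have haU : a ∈ U := Metric.mem_ball_self hr0
    have hbV : b ∈ V := Metric.mem_ball_self hr0
    have hUV : ∀ x ∈ U, ∀ y ∈ V, r ≤ dist x y := by
      intro x hx y hy
      have hx' : dist x a < r := Metric.mem_ball.mp hx
      have hy' : dist y b < r := Metric.mem_ball.mp hy
      have h4 : dist a b ≤ dist a x + dist x y + dist y b := dist_triangle4 a x y b
      have hxa : dist a x = dist x a := dist_comm a x
      linarith
    -- points of D are far from U ∪ V
    have hDfar : ∀ z ∈ D, ∀ w ∈ U ∪ V, r < dist z w := by
      intro z hz w hw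
      rcases hw with hw | hw
      · have h1 : dist w a < r := Metric.mem_ball.mp hw
        have h2 : ρ ≤ dist z a := (hDρ z hz).1
        have h3 : dist z a ≤ dist z w + dist w a := dist_triangle z w a
        linarith
      · have h1 : dist w b < r := Metric.mem_ball.mp hw
        have h2 : ρ ≤ dist z b := (hDρ z hz).2
        have h3 : dist z b ≤ dist z w + dist w b := dist_triangle z w b
        linarith
    -- D is disjoint from U and V
    have hDU : ∀ z ∈ D, z ∉ U := by
      intro z hz hzU
      have h1 : dist z a < r := Metric.mem_ball.mp hzU
      have h2 : ρ ≤ dist z a := (hDρ z hz).1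
      linarith
    have hDV : ∀ z ∈ D, z ∉ V := by
      intro z hz hzV
      have h1 : dist z b < r := Metric.mem_ball.mp hzV
      have h2 : ρ ≤ dist z b := (hDρ z hz).2
      linarith
    -- g₀ powers fix a and b
    have hfixa : ∀ m : ℤ, (g₀ ^ m) • a = a := by
      intro m
      have h1 : g₀ ∈ MulAction.stabilizer Γ a := hfa
      exact (Subgroup.zpow_mem _ h1 m : g₀ ^ m ∈ MulAction.stabilizer Γ a)
    have hfixb : ∀ m : ℤ, (g₀ ^ m) • b = b := by
      intro m
      have h1 : g₀ ∈ MulAction.stabilizer Γ b := hfb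
      exact (Subgroup.zpow_mem _ h1 m : g₀ ^ m ∈ MulAction.stabilizer Γ b)
    -- eventually the orbit points are in U and V
    have hev : ∀ᶠ i in atTop, u i • a ∈ U ∧ u i • b ∈ V := by
      have := htt (prod_mem_nhds (Metric.ball_mem_nhds a hr0) (Metric.ball_mem_nhds b hr0))
      filter_upwards [this] with i hi
      exact ⟨hi.1, hi.2⟩
    obtain ⟨N, hN⟩ := eventually_atTop.mp hev
    -- produce a point of D
    have hc : ∃ c : X, c ≠ a ∧ c ≠ b := by
      have hNa := hN N le_rfl
      have := hne N
      rw [Ne, Prod.mk.injEq, not_and_or] at this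
      rcases this with h | h
      · refine ⟨u N • a, h, ?_⟩
        intro hcb
        have : b ∈ U := hcb ▸ hNa.1
        have h1 : dist b a < r := Metric.mem_ball.mp this
        have := dist_comm b a
        linarith
      · refine ⟨u N • b, ?_, h⟩
        intro hca
        have : a ∈ V := hca ▸ hNa.2
        have h1 : dist a b < r := Metric.mem_ball.mp this
        linarith
    obtain ⟨c, hca, hcb⟩ := hc
    obtain ⟨m₀, hpD⟩ := hfund c hca hcb
    set p : X := (g₀ ^ m₀) • c with hpdef
    -- the finite set from properness
    have hSfin := hproper r hr0 U V Metric.isOpen_ball Metric.isOpen_ball hUV a haU b hbV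
    set S : Set Γ := {g : Γ | ∃ x ∈ U, ∃ y ∈ V, ∃ z : X,
        (∀ w ∈ U ∪ V, r < dist z w) ∧ g • x ∈ U ∧ g • y ∈ V ∧
        (∀ w ∈ U ∪ V, r < dist (g • z) w)} with hSdef
    -- key claim: for i ≥ N, the orbit pair is realized by an element of S
    have hclaim : ∀ i, N ≤ i → ∃ g ∈ S, g • a = u i • a ∧ g • b = u i • b := by
      intro i hi
      obtain ⟨hiU, hiV⟩ := hN i hi
      set y : X := (u i)⁻¹ • p with hydef
      have hya : y ≠ a := by
        intro h
        have : p = u i • a := by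
          rw [← h, hydef, smul_inv_smul]
        exact hDU p hpD (this ▸ hiU)
      have hyb : y ≠ b := by
        intro h
        have : p = u i • b := by
          rw [← h, hydef, smul_inv_smul]
        exact hDV p hpD (this ▸ hiV)
      obtain ⟨m, hzD⟩ := hfund y hya hyb
      set z : X := (g₀ ^ m) • y with hzdef
      have hfa' : (g₀ ^ m)⁻¹ • a = a := inv_smul_eq_iff.mpr (hfixa m).symm
      have hfb' : (g₀ ^ m)⁻¹ • b = b := inv_smul_eq_iff.mpr (hfixb m).symm
      refine ⟨u i * (g₀ ^ m)⁻¹, ?_, ?_, ?_⟩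
      · refine ⟨a, haU, b, hbV, z, hDfar z hzD, ?_, ?_, ?_⟩
        · have h' : (u i * (g₀ ^ m)⁻¹) • a = u i • a := by rw [mul_smul, hfa']
          rw [h']; exact hiU
        · have h' : (u i * (g₀ ^ m)⁻¹) • b = u i • b := by rw [mul_smul, hfb']
          rw [h']; exact hiV
        · have hgz : (u i * (g₀ ^ m)⁻¹) • z = p := by
            rw [hzdef, mul_smul, inv_smul_smul, hydef, smul_inv_smul]
          rw [hgz]; exact hDfar p hpD
      · rw [mul_smul, hfa']
      · rw [mul_smul, hfb']
    -- the orbit pairs lie eventually in a finite closed set avoiding (a,b)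
    set F : Set (X × X) := ((fun g : Γ => (g • a, g • b)) '' S) \ {(a, b)} with hFdef
    have hFfin : F.Finite := (hSfin.image _).subset Set.diff_subset
    have hmem : ∀ᶠ i in atTop, (u i • a, u i • b) ∈ F := by
      rw [eventually_atTop]
      refine ⟨N, fun i hi => ?_⟩
      obtain ⟨g, hgS, hg1, hg2⟩ := hclaim i hi
      exact ⟨⟨g, hgS, by dsimp only; rw [hg1, hg2]⟩, hne i⟩
    have hcl : (a, b) ∈ closure F := mem_closure_of_tendsto htt hmem
    rw [hFfin.isClosed.closure_eq] at hcl
    exact hcl.2 rfl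
  refine ⟨key, ?_⟩
  intro g₁
  by_contra hcon
  push_neg at hcon
  have hcon' : ∀ i : ℕ, ∃ g : Γ, (g • a, g • b) ≠ (g₁ • a, g₁ • b) ∧
      dist (g • a) (g₁ • a) + dist (g • b) (g₁ • b) < 1 / (i + 1) := by
    intro i
    exact hcon (1 / (i + 1)) (by positivity)
  choose v hv1 hv2 using hcon'
  apply key
  refine ⟨fun i => g₁⁻¹ * v i, ?_, ?_⟩
  · intro i h
    rw [Prod.mk.injEq] at h
    obtain ⟨h1, h2⟩ := h
    simp only [mul_smul] at h1 h2
    rw [inv_smul_eq_iff] at h1 h2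
    apply hv1 i
    rw [Prod.mk.injEq]
    exact ⟨h1, h2⟩
  · have hlim : Tendsto (fun i : ℕ => (1 : ℝ) / (i + 1)) atTop (nhds 0) :=
      tendsto_one_div_add_atTop_nhds_zero_nat
    have hta : Tendsto (fun i => v i • a) atTop (nhds (g₁ • a)) := by
      rw [tendsto_iff_dist_tendsto_zero]
      refine squeeze_zero (fun i => dist_nonneg) (fun i => ?_) hlim
      have := hv2 i
      have h0 : (0 : ℝ) ≤ dist (v i • b) (g₁ • b) := dist_nonneg
      linarith
    have htb : Tendsto (fun i => v i • b) atTop (nhds (g₁ • b)) := by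
      rw [tendsto_iff_dist_tendsto_zero]
      refine squeeze_zero (fun i => dist_nonneg) (fun i => ?_) hlim
      have := hv2 i
      have h0 : (0 : ℝ) ≤ dist (v i • a) (g₁ • a) := dist_nonneg
      linarith
    have hca : Tendsto (fun i => (g₁⁻¹ * v i) • a) atTop (nhds a) := by
      have := ((hcont g₁⁻¹).continuousAt (x := g₁ • a)).tendsto.comp hta
      simpa [mul_smul, inv_smul_smul, Function.comp_def] using this
    have hcb : Tendsto (fun i => (g₁⁻¹ * v i) • b) atTop (nhds b) := by
      have := ((hcont g₁⁻¹).continuousAt (x := g₁ • b)).tendsto.comp htb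
      simpa [mul_smul, inv_smul_smul, Function.comp_def] using this
    exact hca.prodMk_nhds hcb
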